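/- Let Z be normal, A Hermitian with extremal eigenvalues p ≥ q, and B Hermitian with extremal eigenvalues r ≥ s. Then |Tr(|Z|²AB) − Tr(Z*AZB)| ≤ (1/2)(p−q)(r−s)·Tr(|Z|²). -/

import Mathlib

open Matrix ComplexOrder

/-!
For normal `Z` both traces change by the same amount when `A` or `B` is shifted by a scalar, so we
may centre them: `X = A - (p + q) / 2` and `Y = B - (r + s) / 2` satisfy `X² ≤ ((p - q) / 2)²` and
`Y² ≤ ((r - s) / 2)²`. The two traces are then the Frobenius inner products `⟪Z, Z X Y⟫` and
`⟪Xᴴ Z, Z Y⟫`, and Cauchy–Schwarz together with `‖X Z‖ ≤ (p - q) / 2 * ‖Z‖` bounds each of them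
by `(p - q) (r - s) / 4 * ‖Z‖²`.
-/

theorem IsSelfAdjoint.sq_sub_midpoint_le_of_spectrum_subset_Icc {A : Type*} [Ring A] [StarRing A]
    [Algebra ℝ A] [TopologicalSpace A] [IsTopologicalRing A] [PartialOrder A] [StarOrderedRing A]
    [ContinuousFunctionalCalculus ℝ A IsSelfAdjoint] {a : A} (ha : IsSelfAdjoint a) {q p : ℝ}
    (h : spectrum ℝ a ⊆ Set.Icc q p) :
    (a - algebraMap ℝ A ((p + q) / 2)) ^ 2 ≤ algebraMap ℝ A (((p - q) / 2) ^ 2) := by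
  rw [← cfc_id' ℝ a, ← cfc_const ((p + q) / 2) a, ← cfc_sub .., ← cfc_pow ..]
  refine cfc_le_algebraMap _ _ a fun x hx => ?_
  obtain ⟨hqx, hxp⟩ := h hx
  nlinarith

namespace Matrix

variable {𝕜 m n : Type*} [RCLike 𝕜] [Fintype m] [Fintype n]

open scoped MatrixOrder in
theorem IsHermitian.posSemidef_smul_one_sub_sq_of_eigenvalues_mem_Icc [DecidableEq n]
    {A : Matrix n n 𝕜} (hA : A.IsHermitian) {q p : ℝ} (h : ∀ i, hA.eigenvalues i ∈ Set.Icc q p) :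
    (((p - q) / 2) ^ 2 • 1 - (A - ((p + q) / 2) • 1) ^ 2).PosSemidef := by
  have hspec : spectrum ℝ A ⊆ Set.Icc q p := by
    rw [hA.spectrum_real_eq_range_eigenvalues]
    rintro _ ⟨i, rfl⟩
    exact h i
  simpa [Algebra.algebraMap_eq_smul_one, Matrix.le_iff] using
    hA.isSelfAdjoint.sq_sub_midpoint_le_of_spectrum_subset_Icc hspec

theorem trace_sub_trace_sub_smul_one_of_normal [DecidableEq n] {Z : Matrix n n 𝕜}
    (hZ : Zᴴ * Z = Z * Zᴴ) (A B : Matrix n n 𝕜) (α β : 𝕜) :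
    (Zᴴ * Z * (A - α • 1) * (B - β • 1)).trace - (Zᴴ * (A - α • 1) * Z * (B - β • 1)).trace =
      (Zᴴ * Z * A * B).trace - (Zᴴ * A * Z * B).trace := by
  have hcycle : (Zᴴ * A * Z).trace = (Zᴴ * Z * A).trace := by
    rw [trace_mul_comm, ← Matrix.mul_assoc, ← hZ]
  simp only [Matrix.mul_sub, Matrix.sub_mul, Matrix.mul_smul, Matrix.smul_mul, Matrix.mul_one,
    trace_sub, trace_smul, smul_eq_mul, hcycle]
  ring

section Frobenius

open scoped Norms.Frobenius
open WithLp

-- The Frobenius norm of `U` is by definition the norm of its vector of rows in `ℓ²(ℓ²)`.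
theorem inner_toLp_rows_eq_trace_conjTranspose_mul (U V : Matrix m n 𝕜) :
    inner 𝕜 (toLp 2 fun i => toLp 2 (U i)) (toLp 2 fun i => toLp 2 (V i)) = (Uᴴ * V).trace := by
  simp only [PiLp.inner_apply, trace, diag, mul_apply, conjTranspose_apply, RCLike.inner_apply]
  rw [Finset.sum_comm]
  simp [mul_comm]

theorem frobenius_norm_sq_eq_re_trace (U : Matrix m n 𝕜) :
    ‖U‖ ^ 2 = RCLike.re (Uᴴ * U).trace := by
  rw [← inner_toLp_rows_eq_trace_conjTranspose_mul, inner_self_eq_norm_sq]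
  rfl

theorem norm_trace_conjTranspose_mul_le (U V : Matrix m n 𝕜) :
    ‖(Uᴴ * V).trace‖ ≤ ‖U‖ * ‖V‖ := by
  rw [← inner_toLp_rows_eq_trace_conjTranspose_mul]
  exact norm_inner_le_norm _ _

theorem frobenius_norm_mul_le_of_posSemidef_left [DecidableEq m] {X : Matrix m m 𝕜} {c : ℝ}
    (hc : 0 ≤ c) (hX : (c ^ 2 • 1 - Xᴴ * X).PosSemidef) (Z : Matrix m n 𝕜) :
    ‖X * Z‖ ≤ c * ‖Z‖ := by
  have h := RCLike.nonneg_iff.mp (hX.conjTranspose_mul_mul_same Z).trace_nonneg |>.1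
  simp only [Matrix.mul_sub, Matrix.sub_mul, Matrix.mul_smul, Matrix.smul_mul, Matrix.mul_one,
    trace_sub, trace_smul, map_sub, RCLike.smul_re] at h
  refine le_of_sq_le_sq ?_ (by positivity)
  rw [mul_pow, frobenius_norm_sq_eq_re_trace, frobenius_norm_sq_eq_re_trace, conjTranspose_mul,
    ← Matrix.mul_assoc, Matrix.mul_assoc Zᴴ]
  linarith

theorem frobenius_norm_mul_le_of_posSemidef_right [DecidableEq n] {Y : Matrix n n 𝕜} {c : ℝ}
    (hc : 0 ≤ c) (hY : (c ^ 2 • 1 - Y * Yᴴ).PosSemidef) (Z : Matrix m n 𝕜) :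
    ‖Z * Y‖ ≤ c * ‖Z‖ := by
  rw [← frobenius_norm_conjTranspose, conjTranspose_mul, ← frobenius_norm_conjTranspose Z]
  exact frobenius_norm_mul_le_of_posSemidef_left hc (by rwa [conjTranspose_conjTranspose]) _

theorem norm_trace_sub_trace_le_of_posSemidef [DecidableEq n] {X Y : Matrix n n 𝕜} {a b : ℝ}
    (ha : 0 ≤ a) (hb : 0 ≤ b) (hX : (a ^ 2 • 1 - X * Xᴴ).PosSemidef)
    (hY : (b ^ 2 • 1 - Y * Yᴴ).PosSemidef) (Z : Matrix n n 𝕜) :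
    ‖(Zᴴ * Z * X * Y).trace - (Zᴴ * X * Z * Y).trace‖ ≤ 2 * a * b * RCLike.re (Zᴴ * Z).trace := by
  have hXconj : (a ^ 2 • 1 - Xᴴᴴ * Xᴴ).PosSemidef := by rwa [conjTranspose_conjTranspose]
  have h₁ : (Zᴴ * Z * X * Y).trace = (Zᴴ * (Z * X * Y)).trace := by
    simp only [Matrix.mul_assoc]
  have h₂ : (Zᴴ * X * Z * Y).trace = ((Xᴴ * Z)ᴴ * (Z * Y)).trace := by
    simp only [conjTranspose_mul, conjTranspose_conjTranspose, Matrix.mul_assoc]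
  have hZXY : ‖Z * X * Y‖ ≤ b * (a * ‖Z‖) :=
    (frobenius_norm_mul_le_of_posSemidef_right hb hY _).trans <| by
      gcongr; exact frobenius_norm_mul_le_of_posSemidef_right ha hX Z
  calc ‖(Zᴴ * Z * X * Y).trace - (Zᴴ * X * Z * Y).trace‖
      ≤ ‖Z‖ * ‖Z * X * Y‖ + ‖Xᴴ * Z‖ * ‖Z * Y‖ := by
        rw [h₁, h₂]
        exact (norm_sub_le _ _).trans
          (add_le_add (norm_trace_conjTranspose_mul_le _ _) (norm_trace_conjTranspose_mul_le _ _))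
    _ ≤ ‖Z‖ * (b * (a * ‖Z‖)) + (a * ‖Z‖) * (b * ‖Z‖) := by
        gcongr
        · exact frobenius_norm_mul_le_of_posSemidef_left ha hXconj Z
        · exact frobenius_norm_mul_le_of_posSemidef_right hb hY Z
    _ = 2 * a * b * RCLike.re (Zᴴ * Z).trace := by
        rw [← frobenius_norm_sq_eq_re_trace]
        ring

end Frobenius

end Matrix

theorem gruss_trace_normal {n : ℕ} (Z A B : Matrix (Fin n) (Fin n) ℂ)
    (hZ : Zᴴ * Z = Z * Zᴴ) (hA : A.IsHermitian) (hB : B.IsHermitian)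
    (p q r s : ℝ)
    (hp : IsGreatest (Set.range hA.eigenvalues) p)
    (hq : IsLeast (Set.range hA.eigenvalues) q)
    (hr : IsGreatest (Set.range hB.eigenvalues) r)
    (hs : IsLeast (Set.range hB.eigenvalues) s) :
    ‖Matrix.trace (Zᴴ * Z * A * B) - Matrix.trace (Zᴴ * A * Z * B)‖ ≤
      (1 / 2) * (p - q) * (r - s) * (Matrix.trace (Zᴴ * Z)).re := by
  have hqp : q ≤ p := hp.2 hq.1
  have hsr : s ≤ r := hr.2 hs.1
  have hXa := hA.posSemidef_smul_one_sub_sq_of_eigenvalues_mem_Icc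
    fun i => ⟨hq.2 ⟨i, rfl⟩, hp.2 ⟨i, rfl⟩⟩
  have hYb := hB.posSemidef_smul_one_sub_sq_of_eigenvalues_mem_Icc
    fun i => ⟨hs.2 ⟨i, rfl⟩, hr.2 ⟨i, rfl⟩⟩
  set X := A - ((p + q) / 2 : ℝ) • 1
  set Y := B - ((r + s) / 2 : ℝ) • 1
  have hX : Xᴴ = X := by simp [X, hA.eq]
  have hY : Yᴴ = Y := by simp [Y, hB.eq]
  have hshift := trace_sub_trace_sub_smul_one_of_normal hZ A B ((p + q) / 2 : ℝ) ((r + s) / 2 : ℝ)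
  rw [Complex.coe_smul, Complex.coe_smul] at hshift
  rw [← hshift]
  refine (norm_trace_sub_trace_le_of_posSemidef (a := (p - q) / 2) (b := (r - s) / 2)
    (by linarith) (by linarith) (by rwa [hX, ← sq]) (by rwa [hY, ← sq]) Z).trans_eq ?_
  rw [RCLike.re_to_complex]
  ring
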